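/- Exactness of one step of the acceleration calculus (Lemma 1, exactness part): Let φ̌, χ : ℤ^d → Prop, a : ℤ^d → ℤ^d, and let ψ₁, ψ₂ : ℤ^d → ℕ → ℤ^d → Prop. Assume (i) ψ₁ is equivalent to ⟨φ̌,a⟩, i.e., for all n > 0 and x, x' ∈ ℤ^d, ψ₁(x,n,x') ↔ x →ⁿ_{⟨φ̌,a⟩} x'; (ii) for all n > 0 and x, x' ∈ ℤ^d, (x →ⁿ_{⟨φ̌,a⟩} x' ∧ ψ₂(x,n,x')) implies x →ⁿ_{⟨χ,a⟩} x'; and (iii) for all n > 0 and x, x' ∈ ℤ^d, x →ⁿ_{⟨λ y, χ(y) ∧ φ̌(y), a⟩} x' implies ψ₂(x,n,x'). Then for all n > 0 and x, x' ∈ ℤ^d, (ψ₁(x,n,x') ∧ ψ₂(x,n,x')) ↔ x →ⁿ_{⟨λ y, φ̌(y) ∧ χ(y), a⟩} x'. -/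
import Mathlib

def Step {d : ℕ} (φ : (Fin d → ℤ) → Prop) (a : (Fin d → ℤ) → (Fin d → ℤ))
    (x x' : Fin d → ℤ) : Prop :=
  φ x ∧ x' = a x

def StepN {d : ℕ} (φ : (Fin d → ℤ) → Prop) (a : (Fin d → ℤ) → (Fin d → ℤ)) :
    ℕ → (Fin d → ℤ) → (Fin d → ℤ) → Prop
  | 0, x, x' => x = x'
  | n + 1, x, x' => ∃ y, Step φ a x y ∧ StepN φ a n y x'

lemma stepN_mono {d : ℕ} {φ χ : (Fin d → ℤ) → Prop} {a : (Fin d → ℤ) → (Fin d → ℤ)}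
    (h : ∀ y, φ y → χ y) : ∀ n x x', StepN φ a n x x' → StepN χ a n x x' := by
  intro n
  induction n with
  | zero => intro x x' hx; exact hx
  | succ n ih =>
    rintro x x' ⟨y, ⟨hφ, hy⟩, hrest⟩
    exact ⟨y, ⟨h x hφ, hy⟩, ih y x' hrest⟩

lemma stepN_and {d : ℕ} {φ χ : (Fin d → ℤ) → Prop} {a : (Fin d → ℤ) → (Fin d → ℤ)} :
    ∀ n x x', StepN φ a n x x' → StepN χ a n x x' →
      StepN (fun y => φ y ∧ χ y) a n x x' := by
  intro n
  induction n with
  | zero => intro x x' hx _; exact hx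
  | succ n ih =>
    rintro x x' ⟨y, ⟨hφ, hy⟩, hrest⟩ ⟨z, ⟨hχ, hz⟩, hrest'⟩
    subst hy
    subst hz
    exact ⟨a x, ⟨⟨hφ, hχ⟩, rfl⟩, ih _ _ hrest hrest'⟩

theorem calculus_step_exactness
    {d : ℕ} (φc χ : (Fin d → ℤ) → Prop) (a : (Fin d → ℤ) → (Fin d → ℤ))
    (ψ₁ ψ₂ : (Fin d → ℤ) → ℕ → (Fin d → ℤ) → Prop)
    (h1 : ∀ n : ℕ, 0 < n → ∀ x x' : Fin d → ℤ, ψ₁ x n x' ↔ StepN φc a n x x')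
    (h2 : ∀ n : ℕ, 0 < n → ∀ x x' : Fin d → ℤ,
      StepN φc a n x x' ∧ ψ₂ x n x' → StepN χ a n x x')
    (h3 : ∀ n : ℕ, 0 < n → ∀ x x' : Fin d → ℤ,
      StepN (fun y => χ y ∧ φc y) a n x x' → ψ₂ x n x') :
    ∀ n : ℕ, 0 < n → ∀ x x' : Fin d → ℤ,
      (ψ₁ x n x' ∧ ψ₂ x n x') ↔ StepN (fun y => φc y ∧ χ y) a n x x' := by
  intro n hn x x'
  constructor
  · rintro ⟨hψ1, hψ2⟩
    have hφ := (h1 n hn x x').mp hψ1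
    have hχ := h2 n hn x x' ⟨hφ, hψ2⟩
    exact stepN_and n x x' hφ hχ
  · intro h
    have hφ : StepN φc a n x x' := stepN_mono (fun y hy => hy.1) n x x' h
    have hψ2 : ψ₂ x n x' :=
      h3 n hn x x' (stepN_mono (fun y hy => ⟨hy.2, hy.1⟩) n x x' h)
    exact ⟨(h1 n hn x x').mpr hφ, hψ2⟩
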